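/- Let Q = (0,T) × 𝕋³ with the Lebesgue measure. Let F_n, F : ℝ³ˣ³_sym → [0,∞) be convex functions, finite everywhere, such that F_n → F uniformly on every compact subset of ℝ³ˣ³_sym. Let V : Q → ℝ³ˣ³_sym be continuous and bounded, and let 𝕊_n → 𝕊 weakly in L¹(Q; ℝ³ˣ³_sym). Assume that for every n, 𝕊_n(t,x) ∈ ∂F_n(V(t,x)) for a.e. (t,x) ∈ Q, i.e. for every 𝔻 ∈ ℝ³ˣ³_sym: F_n(𝔻) − 𝕊_n(t,x):(𝔻 − V(t,x)) − F_n(V(t,x)) ≥ 0 a.e. Then 𝕊(t,x) ∈ ∂F(V(t,x)) for a.e. (t,x) ∈ Q, i.e. for every 𝔻 ∈ ℝ³ˣ³_sym: F(𝔻) − 𝕊(t,x):(𝔻 − V(t,x)) − F(V(t,x)) ≥ 0 for a.e. (t,x). -/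

import Mathlib

/-!
Fix a symmetric `D`. For a measurable `s`, test the weak convergence `𝕊ₙ ⇀ 𝕊` against
`1ₛ (D - V)`: the subgradient inequality gives `∫ₛ 𝕊ₙ : (D - V) ≤ ∫ₛ (Fₙ D - Fₙ V)`, and since
`Fₙ → F` uniformly on a compact set containing `D` and the bounded range of `V`, the limit gives
`∫ₛ 𝕊 : (D - V) ≤ ∫ₛ (F D - F V)`. As `s` is arbitrary, `𝕊 : (D - V) ≤ F D - F V` a.e.
The null set depends on `D`, so this is done for a countable dense set of symmetric `D`, and
extended to all of them by continuity of the convex function `F` on the symmetric matrices.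
-/

open MeasureTheory Filter Set

noncomputable section

/-- Points of `ℝ³`; functions on the torus `𝕋³` are identified with `ℤ³`-periodic
functions; a fundamental domain is the unit box. -/
abbrev V3 := Fin 3 → ℝ

/-- The space of real 3×3 matrices; symmetric ones are cut out by `Matrix.IsSymm`. -/
abbrev Mat3 := Matrix (Fin 3) (Fin 3) ℝ

/-- Frobenius inner product `𝕊:𝔻`. -/
def mdot (A B : Mat3) : ℝ := ∑ i, ∑ j, A i j * B i j

noncomputable def mnorm (A : Mat3) : ℝ := Real.sqrt (mdot A A)

/-- A fundamental domain of `𝕋³`. -/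
def box : Set V3 := Set.Icc 0 1

/-- The Lebesgue measure on `Q = (0,T) × 𝕋³`. -/
noncomputable def μQ (T : ℝ) : Measure (ℝ × V3) :=
  volume.restrict (Set.Ioo 0 T ×ˢ box)

namespace Matrix

variable {n : Type*}

def symmPart : Matrix n n ℝ →ₗ[ℝ] Matrix n n ℝ :=
  (2⁻¹ : ℝ) • (LinearMap.id + (transposeLinearEquiv n n ℝ ℝ).toLinearMap)

lemma symmPart_apply (A : Matrix n n ℝ) : symmPart A = (2⁻¹ : ℝ) • (A + Aᵀ) := rfl

lemma isSymm_symmPart (A : Matrix n n ℝ) : (symmPart A).IsSymm := by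
  rw [IsSymm, symmPart_apply, transpose_smul, transpose_add, transpose_transpose, add_comm]

lemma symmPart_of_isSymm {A : Matrix n n ℝ} (hA : A.IsSymm) : symmPart A = A := by
  rw [symmPart_apply, hA.eq]; module

attribute [local instance] Matrix.normedAddCommGroup Matrix.normedSpace in
theorem _root_.ConvexOn.continuousOn_setOf_isSymm [Fintype n] {F : Matrix n n ℝ → ℝ}
    (hF : ConvexOn ℝ {A | A.IsSymm} F) : ContinuousOn F {A | A.IsSymm} := by
  have hconv : ConvexOn ℝ univ (F ∘ symmPart) := by
    simpa [preimage, isSymm_symmPart] using hF.comp_linearMap symmPart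
  have hcont : Continuous (F ∘ symmPart) :=
    continuousOn_univ.1 (hconv.continuousOn isOpen_univ)
  exact hcont.continuousOn.congr fun A hA => by simp [symmPart_of_isSymm hA]

end Matrix

section Frobenius

attribute [local instance] Matrix.frobeniusNormedAddCommGroup Matrix.frobeniusNormedSpace

lemma mnorm_eq_norm (A : Mat3) : mnorm A = ‖A‖ := by
  rw [Matrix.frobenius_norm_def, ← Real.sqrt_eq_rpow, mnorm, mdot]
  simp_rw [Real.norm_eq_abs, Real.rpow_two, sq_abs, sq]

lemma continuous_mnorm : Continuous mnorm := by
  rw [funext mnorm_eq_norm]; exact continuous_norm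

lemma isCompact_setOf_isSymm_mnorm_le (M : ℝ) :
    IsCompact {A : Mat3 | A.IsSymm ∧ mnorm A ≤ M} := by
  have hsymm : IsClosed {A : Mat3 | A.IsSymm} :=
    isClosed_eq continuous_id.matrix_transpose continuous_id
  have hK : {A : Mat3 | A.IsSymm ∧ mnorm A ≤ M} = {A | A.IsSymm} ∩ Metric.closedBall 0 M := by
    ext A; simp [mnorm_eq_norm]
  rw [hK]; exact (isCompact_closedBall (0 : Mat3) M).inter_left hsymm

end Frobenius

@[fun_prop]
lemma continuous_mdot_right (A : Mat3) : Continuous (mdot A) := by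
  unfold mdot; fun_prop

instance : SecondCountableTopology Mat3 :=
  inferInstanceAs (SecondCountableTopology (Fin 3 → Fin 3 → ℝ))

instance : MeasurableSpace Mat3 := borel Mat3

instance : BorelSpace Mat3 := ⟨rfl⟩

lemma measurable_entry (i j : Fin 3) : Measurable fun A : Mat3 => A i j :=
  (continuous_id.matrix_elem i j).measurable

section Measure

variable {Ω : Type*} [MeasurableSpace Ω] {μ : Measure Ω}

def TendstoWeakL1 (Sn : ℕ → Ω → Mat3) (S : Ω → Mat3) (μ : Measure Ω) : Prop :=
  ∀ Φ : Ω → Mat3, (∀ i j, Measurable fun p => Φ p i j) → (∃ M, ∀ p, mnorm (Φ p) ≤ M) →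
    Tendsto (fun n => ∫ p, mdot (Sn n p) (Φ p) ∂μ) atTop (nhds (∫ p, mdot (S p) (Φ p) ∂μ))

theorem ae_forall_mem_nonneg_of_continuousOn {X : Type*} [TopologicalSpace X]
    [SecondCountableTopology X] {s : Set X} {φ : Ω → X → ℝ} (hφ : ∀ p, ContinuousOn (φ p) s)
    (h : ∀ x ∈ s, ∀ᵐ p ∂μ, 0 ≤ φ p x) : ∀ᵐ p ∂μ, ∀ x ∈ s, 0 ≤ φ p x := by
  obtain ⟨c, hc, hdense⟩ := TopologicalSpace.exists_countable_dense s
  filter_upwards [(ae_ball_iff hc).2 fun y _ => h y y.2] with p hp x hx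
  have hclosed : IsClosed {y : s | 0 ≤ φ p y} := isClosed_le continuous_const (hφ p).domRestrict
  exact hclosed.closure_subset_iff.2 hp (hdense ⟨x, hx⟩)

theorem exists_measurable_mem_ae_eq_restrict {α X : Type*} [TopologicalSpace α]
    [MeasurableSpace α] [OpensMeasurableSpace α] [TopologicalSpace X] [MeasurableSpace X]
    [BorelSpace X]
    {ν : Measure α} {s : Set α} (hs : MeasurableSet s) {V : α → X} (hV : ContinuousOn V s)
    {K : Set X} (hVK : MapsTo V s K) {x₀ : X} (hx₀ : x₀ ∈ K) :
    ∃ W : α → X, Measurable W ∧ (∀ p, W p ∈ K) ∧ ∀ᵐ p ∂ν.restrict s, W p = V p := by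
  classical
  refine ⟨s.piecewise V fun _ => x₀, hV.measurable_piecewise continuousOn_const hs, fun p => ?_,
    (ae_restrict_mem hs).mono fun p hp => piecewise_eq_of_mem _ _ _ hp⟩
  by_cases hp : p ∈ s
  · simpa [hp] using hVK hp
  · simpa [hp] using hx₀

theorem integrable_mdot_of_mem_compact {S Ψ : Ω → Mat3}
    (hS : ∀ i j, Integrable (fun p => S p i j) μ) (hΨ : Measurable Ψ)
    {L : Set Mat3} (hL : IsCompact L) (hΨL : ∀ p, Ψ p ∈ L) :
    Integrable (fun p => mdot (S p) (Ψ p)) μ := by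
  refine integrable_finsetSum _ fun i _ => integrable_finsetSum _ fun j _ => ?_
  obtain ⟨C, hC⟩ := hL.exists_bound_of_continuousOn (continuous_id.matrix_elem i j).continuousOn
  exact (hS i j).mul_bdd ((measurable_entry i j).comp hΨ).aestronglyMeasurable
    (ae_of_all _ fun p => hC _ (hΨL p))

theorem ae_mdot_le_of_weak_limit {Sn : ℕ → Ω → Mat3} {S : Ω → Mat3}
    (hSn : ∀ n i j, Integrable (fun p => Sn n p i j) μ)
    (hS : ∀ i j, Integrable (fun p => S p i j) μ)
    (hweak : TendstoWeakL1 Sn S μ)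
    {Ψ : Ω → Mat3} (hΨ : Measurable Ψ) {L : Set Mat3} (hL : IsCompact L) (hΨL : ∀ p, Ψ p ∈ L)
    {G : Ω → ℝ} (hG : Integrable G μ)
    (hle : ∀ᶠ n in atTop, ∀ᵐ p ∂μ, mdot (Sn n p) (Ψ p) ≤ G p) :
    ∀ᵐ p ∂μ, mdot (S p) (Ψ p) ≤ G p := by
  refine ae_le_of_forall_setIntegral_le (integrable_mdot_of_mem_compact hS hΨ hL hΨL) hG
    fun s hs _ => ?_
  have hΦ : Measurable (s.indicator Ψ) := hΨ.indicator hs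
  obtain ⟨C, hC⟩ := (hL.insert 0).bddAbove_image continuous_mnorm.continuousOn
  have hΦC : ∀ p, mnorm (s.indicator Ψ p) ≤ C := fun p => hC ⟨_, by
    by_cases hp : p ∈ s <;> simp [hp, hΨL p], rfl⟩
  have hpair (R : Ω → Mat3) (p : Ω) :
      mdot (R p) (s.indicator Ψ p) = s.indicator (fun p => mdot (R p) (Ψ p)) p := by
    by_cases hp : p ∈ s <;> simp [hp, mdot]
  have hlim := hweak (s.indicator Ψ) (fun i j => (measurable_entry i j).comp hΦ) ⟨C, hΦC⟩
  simp only [hpair, integral_indicator hs] at hlim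
  refine le_of_tendsto hlim (hle.mono fun n hn => ?_)
  exact setIntegral_mono_ae (integrable_mdot_of_mem_compact (hSn n) hΨ hL hΨL).integrableOn
    hG.integrableOn hn

theorem ae_subgradient_ineq_of_weak_limit [IsFiniteMeasure μ]
    {Fn : ℕ → Mat3 → ℝ} {F : Mat3 → ℝ} {K : Set Mat3} (hK : IsCompact K)
    (hunif : TendstoUniformlyOn Fn F atTop K) (hFK : ContinuousOn F K)
    {V : Ω → Mat3} (hV : Measurable V) (hVK : ∀ p, V p ∈ K)
    {Sn : ℕ → Ω → Mat3} {S : Ω → Mat3}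
    (hSn : ∀ n i j, Integrable (fun p => Sn n p i j) μ)
    (hS : ∀ i j, Integrable (fun p => S p i j) μ)
    (hweak : TendstoWeakL1 Sn S μ)
    {D : Mat3} (hD : D ∈ K)
    (hsub : ∀ n, ∀ᵐ p ∂μ, mdot (Sn n p) (D - V p) ≤ Fn n D - Fn n (V p)) :
    ∀ᵐ p ∂μ, mdot (S p) (D - V p) ≤ F D - F (V p) := by
  have hFV : Integrable (fun p => F (V p)) μ := by
    obtain ⟨C, hC⟩ := hK.exists_bound_of_continuousOn hFK
    refine Integrable.of_bound ?_ C (ae_of_all _ fun p => hC _ (hVK p))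
    exact (hFK.domRestrict.measurable.comp (hV.subtype_mk (h := hVK))).aestronglyMeasurable
  have happrox : ∀ ε > 0, ∀ᵐ p ∂μ, mdot (S p) (D - V p) ≤ F D - F (V p) + 2 * ε := by
    intro ε hε
    refine ae_mdot_le_of_weak_limit hSn hS hweak (Ψ := fun p => D - V p)
      (measurable_const.sub hV) (hK.image (continuous_const.sub continuous_id))
      (fun p => mem_image_of_mem _ (hVK p))
      (((integrable_const _).sub hFV).add (integrable_const _)) ?_
    filter_upwards [Metric.tendstoUniformlyOn_iff.1 hunif ε hε] with n hn
    filter_upwards [hsub n] with p hp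
    have hnD := abs_sub_lt_iff.1 (hn D hD)
    have hnV := abs_sub_lt_iff.1 (hn (V p) (hVK p))
    linarith
  filter_upwards [ae_all_iff.2 fun k : ℕ => happrox _ Nat.one_div_pos_of_nat] with p hp
  have hlim := (tendsto_one_div_add_atTop_nhds_zero_nat.const_mul 2).const_add (F D - F (V p))
  rw [mul_zero, add_zero] at hlim
  exact ge_of_tendsto' hlim hp

end Measure

instance (T : ℝ) : IsFiniteMeasure (μQ T) := by
  refine isFiniteMeasure_restrict.2 (ne_top_of_le_ne_top ?_
    (measure_mono (prod_mono Ioo_subset_Icc_self subset_rfl)))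
  rw [box, Icc_prod_Icc]
  exact isCompact_Icc.measure_lt_top.ne

theorem subdifferential_weak_stability_general (T : ℝ)
    (Fn : ℕ → Mat3 → ℝ) (F : Mat3 → ℝ)
    (hFconv : ConvexOn ℝ {A : Mat3 | A.IsSymm} F)
    (hunif : ∀ K : Set Mat3, IsCompact K → K ⊆ {A : Mat3 | A.IsSymm} →
      TendstoUniformlyOn (fun n => Fn n) F atTop K)
    (V : ℝ × V3 → Mat3)
    (hVsymm : ∀ p, (V p).IsSymm)
    (hVcont : ∀ i j, ContinuousOn (fun p => V p i j) (Set.Ioo 0 T ×ˢ box))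
    (hVbdd : ∃ M, ∀ p ∈ Set.Ioo 0 T ×ˢ box, mnorm (V p) ≤ M)
    (Sn : ℕ → ℝ × V3 → Mat3) (S : ℝ × V3 → Mat3)
    (hSnint : ∀ n i j, Integrable (fun p => Sn n p i j) (μQ T))
    (hSint : ∀ i j, Integrable (fun p => S p i j) (μQ T))
    (hweak : ∀ Φ : ℝ × V3 → Mat3, (∀ i j, Measurable fun p => Φ p i j) →
      (∃ M, ∀ p, mnorm (Φ p) ≤ M) →
      Tendsto (fun n => ∫ p, mdot (Sn n p) (Φ p) ∂μQ T) atTop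
        (nhds (∫ p, mdot (S p) (Φ p) ∂μQ T)))
    (hsub : ∀ n, ∀ᵐ p ∂μQ T, ∀ D : Mat3, D.IsSymm →
      0 ≤ Fn n D - mdot (Sn n p) (D - V p) - Fn n (V p)) :
    ∀ᵐ p ∂μQ T, ∀ D : Mat3, D.IsSymm →
      0 ≤ F D - mdot (S p) (D - V p) - F (V p) := by
  obtain ⟨M, hM⟩ := hVbdd
  set K := {A : Mat3 | A.IsSymm ∧ mnorm A ≤ max M 0}
  have hFcont := hFconv.continuousOn_setOf_isSymm
  have hVQ : ContinuousOn V (Ioo 0 T ×ˢ box) :=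
    continuousOn_pi.2 fun i => continuousOn_pi.2 (hVcont i)
  obtain ⟨W, hW, hWK, hWV⟩ := exists_measurable_mem_ae_eq_restrict (ν := volume) (K := K)
    (measurableSet_Ioo.prod measurableSet_Icc) hVQ
    (fun p hp => ⟨hVsymm p, (hM p hp).trans (le_max_left _ _)⟩)
    (⟨Matrix.isSymm_zero, by simp [mnorm, mdot]⟩ : (0 : Mat3) ∈ K)
  have hkey (D : Mat3) (hD : D.IsSymm) :
      ∀ᵐ p ∂μQ T, 0 ≤ F D - mdot (S p) (D - V p) - F (V p) := by
    have hDK : IsCompact (insert D K) := (isCompact_setOf_isSymm_mnorm_le _).insert D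
    have hDKsymm : insert D K ⊆ {A : Mat3 | A.IsSymm} := insert_subset hD fun A hA => hA.1
    have hsubW (n : ℕ) : ∀ᵐ p ∂μQ T, mdot (Sn n p) (D - W p) ≤ Fn n D - Fn n (W p) := by
      filter_upwards [hsub n, hWV] with p hp hWp
      linarith [hWp ▸ hp D hD]
    filter_upwards [hWV, ae_subgradient_ineq_of_weak_limit hDK (hunif _ hDK hDKsymm)
      (hFcont.mono hDKsymm) hW (fun p => mem_insert_of_mem _ (hWK p)) hSnint hSint hweak
      (mem_insert D K) hsubW] with p hWp hp
    linarith [hWp ▸ hp]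
  exact ae_forall_mem_nonneg_of_continuousOn (fun p => by fun_prop) hkey

/-- stability of the subdifferential inclusion `𝕊ₙ ∈ ∂Fₙ(V)` under
uniform-on-compacts convergence `Fₙ → F` of the convex potentials and weak `L¹`
convergence `𝕊ₙ ⇀ 𝕊`. -/
theorem subdifferential_weak_stability (T : ℝ) (hT : 0 < T)
    (Fn : ℕ → Mat3 → ℝ) (F : Mat3 → ℝ)
    (hFnconv : ∀ n, ConvexOn ℝ {A : Mat3 | A.IsSymm} (Fn n))
    (hFnnn : ∀ n A, 0 ≤ Fn n A)
    (hFconv : ConvexOn ℝ {A : Mat3 | A.IsSymm} F) (hFnn : ∀ A, 0 ≤ F A)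
    (hunif : ∀ K : Set Mat3, IsCompact K → K ⊆ {A : Mat3 | A.IsSymm} →
      TendstoUniformlyOn (fun n => Fn n) F atTop K)
    (V : ℝ × V3 → Mat3)
    (hVsymm : ∀ p, (V p).IsSymm)
    (hVcont : ∀ i j, ContinuousOn (fun p => V p i j) (Set.Ioo 0 T ×ˢ box))
    (hVbdd : ∃ M, ∀ p ∈ Set.Ioo 0 T ×ˢ box, mnorm (V p) ≤ M)
    (Sn : ℕ → ℝ × V3 → Mat3) (S : ℝ × V3 → Mat3)
    (hSnint : ∀ n i j, Integrable (fun p => Sn n p i j) (μQ T))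
    (hSint : ∀ i j, Integrable (fun p => S p i j) (μQ T))
    (hweak : ∀ Φ : ℝ × V3 → Mat3, (∀ i j, Measurable fun p => Φ p i j) →
      (∃ M, ∀ p, mnorm (Φ p) ≤ M) →
      Tendsto (fun n => ∫ p, mdot (Sn n p) (Φ p) ∂μQ T) atTop
        (nhds (∫ p, mdot (S p) (Φ p) ∂μQ T)))
    (hsub : ∀ n, ∀ᵐ p ∂μQ T, ∀ D : Mat3, D.IsSymm →
      0 ≤ Fn n D - mdot (Sn n p) (D - V p) - Fn n (V p)) :
    ∀ᵐ p ∂μQ T, ∀ D : Mat3, D.IsSymm →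
      0 ≤ F D - mdot (S p) (D - V p) - F (V p) :=
  subdifferential_weak_stability_general T Fn F hFconv hunif V hVsymm hVcont hVbdd Sn S hSnint hSint
    hweak hsub
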